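/- arXiv:2106.01886 — 3 statements merged into one kernel-verified Lean document; each statement's English description precedes it below -/
import Mathlib

section
/- Let N be a finite group having a unique minimal normal subgroup S, and suppose that the centralizer C_N(S) is trivial. Then for every nontrivial normal subgroup H of N, the socle of H equals S, i.e. soc(H) = S = soc(N). -/
/-!
A nontrivial normal subgroup `K` of `N` meeting `S` trivially would commute with `S`, hence lie in
`C_N(S) = 1`; so `S` lies in every nontrivial normal subgroup of `N`, in particular in `H` and in
the (characteristic, hence `N`-normal) socle of `H`. Conversely a minimal normal subgroup `M` of `H`
meeting `S` trivially would centralize `S`, so `M ≤ S`.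
-/

/-- A minimal normal subgroup: a nontrivial normal subgroup all of whose proper
normal (in the ambient group) subgroups contained in it are trivial. -/
def IsMinimalNormal {G : Type*} [Group G] (M : Subgroup G) : Prop :=
  M.Normal ∧ M ≠ ⊥ ∧ ∀ K : Subgroup G, K.Normal → K ≤ M → K = ⊥ ∨ K = M

/-- The socle of a group: the subgroup generated by (i.e. the supremum of) all
minimal normal subgroups. -/
def socle (G : Type*) [Group G] : Subgroup G :=
  sSup {M : Subgroup G | IsMinimalNormal M}

open Subgroup

theorem Subgroup.le_centralizer_of_inf_eq_bot {G : Type*} [Group G] {A B : Subgroup G}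
    [A.Normal] [B.Normal] (h : A ⊓ B = ⊥) : A ≤ centralizer (B : Set G) :=
  commutator_eq_bot_iff_le_centralizer.mp (le_bot_iff.mp (h ▸ commutator_le_inf A B))

theorem Subgroup.centralizer_subgroupOf_eq_bot {G : Type*} [Group G] {S H : Subgroup G}
    (hSH : S ≤ H) (hcent : centralizer (S : Set G) = ⊥) :
    centralizer (S.subgroupOf H : Set H) = ⊥ := by
  refine eq_bot_iff.mpr fun x hx => ?_
  have hxS : (x : G) ∈ centralizer (S : Set G) := fun s hs =>
    congrArg Subtype.val (hx ⟨s, hSH hs⟩ (mem_subgroupOf.mpr hs))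
  rw [hcent, mem_bot] at hxS
  exact (mem_bot).mpr (Subtype.ext hxS)

namespace IsMinimalNormal

variable {G : Type*} [Group G]

theorem le_or_inf_eq_bot {M : Subgroup G} (hM : IsMinimalNormal M) (K : Subgroup G) [K.Normal] :
    M ≤ K ∨ M ⊓ K = ⊥ := by
  have : M.Normal := hM.1
  rcases hM.2.2 (M ⊓ K) inferInstance inf_le_left with h | h
  · exact Or.inr h
  · exact Or.inl (h ▸ inf_le_right)

theorem le_of_normal_ne_bot {S : Subgroup G} (hS : IsMinimalNormal S)
    (hcent : centralizer (S : Set G) = ⊥) {K : Subgroup G} [K.Normal] (hK : K ≠ ⊥) : S ≤ K := by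
  have : S.Normal := hS.1
  refine (hS.le_or_inf_eq_bot K).resolve_right fun h => hK ?_
  exact eq_bot_iff.mpr (hcent ▸ le_centralizer_of_inf_eq_bot (inf_comm S K ▸ h))

theorem le_of_centralizer_eq_bot {M : Subgroup G} (hM : IsMinimalNormal M) {A : Subgroup G}
    [A.Normal] (hcent : centralizer (A : Set G) = ⊥) : M ≤ A := by
  have : M.Normal := hM.1
  refine (hM.le_or_inf_eq_bot A).resolve_right fun h => hM.2.1 ?_
  exact eq_bot_iff.mpr (hcent ▸ le_centralizer_of_inf_eq_bot h)

theorem map_equiv {G' : Type*} [Group G'] {M : Subgroup G} (hM : IsMinimalNormal M)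
    (e : G ≃* G') : IsMinimalNormal (M.map e.toMonoidHom) := by
  obtain ⟨hMn, hMne, hmin⟩ := hM
  refine ⟨hMn.map _ e.surjective, (map_eq_bot_iff_of_injective M e.injective).not.mpr hMne,
    fun K hKn hKM => ?_⟩
  have hK : K = (K.comap e.toMonoidHom).map e.toMonoidHom :=
    (map_comap_eq_self_of_surjective e.surjective K).symm
  rcases hmin _ (hKn.comap _)
    ((comap_mono hKM).trans_eq (comap_map_eq_self_of_injective e.injective M)) with h | h
  · exact Or.inl (by rw [hK, h, Subgroup.map_bot])
  · exact Or.inr (by rw [hK, h])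

end IsMinimalNormal

instance socle_characteristic (G : Type*) [Group G] : (socle G).Characteristic :=
  characteristic_iff_le_comap.mpr fun φ =>
    sSup_le fun _ hM => map_le_iff_le_comap.mp (le_sSup (hM.map_equiv φ))

theorem exists_isMinimalNormal_le {G : Type*} [Group G] [Finite G] {K : Subgroup G} [K.Normal]
    (hK : K ≠ ⊥) : ∃ M : Subgroup G, IsMinimalNormal M ∧ M ≤ K := by
  obtain ⟨M, hMK, ⟨hMn, hMne⟩, hmin⟩ :=
    exists_minimal_le_of_wellFoundedLT (fun L : Subgroup G => L.Normal ∧ L ≠ ⊥) K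
      ⟨inferInstance, hK⟩
  refine ⟨M, ⟨hMn, hMne, fun L hLn hLM => or_iff_not_imp_left.mpr fun hL => ?_⟩, hMK⟩
  exact le_antisymm hLM (hmin ⟨hLn, hL⟩ hLM)

theorem socle_ne_bot (G : Type*) [Group G] [Finite G] [Nontrivial G] : socle G ≠ ⊥ := by
  obtain ⟨M, hM, -⟩ := exists_isMinimalNormal_le (top_ne_bot (α := Subgroup G))
  exact ne_bot_of_le_ne_bot hM.2.1 (le_sSup hM)

/-- If a finite group `N` has a unique minimal normal subgroup `S` whose centralizer
in `N` is trivial, then every nontrivial normal subgroup `H` of `N` satisfies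
`soc(H) = S = soc(N)`. -/
theorem socle_eq_of_uniqueMinimalNormal {N : Type*} [Group N] [Finite N]
    (S : Subgroup N) (hS : IsMinimalNormal S)
    (huniq : ∀ M : Subgroup N, IsMinimalNormal M → M = S)
    (hcent : Subgroup.centralizer (S : Set N) = ⊥)
    (H : Subgroup N) [H.Normal] (hH : H ≠ ⊥) :
    Subgroup.map H.subtype (socle ↥H) = S ∧ S = socle N := by
  have : S.Normal := hS.1
  have hSH : S ≤ H := hS.le_of_normal_ne_bot hcent hH
  have : Nontrivial H := (nontrivial_iff_ne_bot H).mpr hH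
  have hsocH_ne : (socle H).map H.subtype ≠ ⊥ :=
    (map_eq_bot_iff_of_injective _ H.subtype_injective).not.mpr (socle_ne_bot H)
  refine ⟨le_antisymm ?_ (hS.le_of_normal_ne_bot hcent hsocH_ne),
    le_antisymm (le_sSup hS) (sSup_le fun M hM => (huniq M hM).le)⟩
  exact map_le_iff_le_comap.mpr <| sSup_le fun M hM =>
    hM.le_of_centralizer_eq_bot (centralizer_subgroupOf_eq_bot hSH hcent)
end

section
/- Let m ≥ 5 and k ≥ 1 with 2k < m. Then the normalizer of A_m^{(k)} in the full symmetric group Sym(Ω_{m,k}) is exactly S_m^{(k)}; that is, N_{Sym(Ω_{m,k})}(φ_{m,k}(Alt(m))) = φ_{m,k}(Sym(m)). -/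
open Pointwise

/-- `Ω_{m,k}`: the set of `k`-element subsets of an `m`-element set. -/
abbrev KSubsets (m k : ℕ) := {A : Finset (Fin m) // A.card = k}

/-- The natural action of `Sym(m)` on `k`-element subsets, `g • A = {g a : a ∈ A}`. -/
instance ksubsetsAction (m k : ℕ) : MulAction (Equiv.Perm (Fin m)) (KSubsets m k) where
  smul g A := ⟨g • A.1, by rw [Finset.card_smul_finset]; exact A.2⟩
  one_smul A := by ext1; exact one_smul _ _
  mul_smul g h A := by ext1; exact mul_smul g h A.1

/-- `φ_{m,k} : Sym(m) → Sym(Ω_{m,k})`, the homomorphism induced by the natural action. -/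
def ksubsetsHom (m k : ℕ) : Equiv.Perm (Fin m) →* Equiv.Perm (KSubsets m k) :=
  MulAction.toPermHom _ _

/-!
An element `π` of the normalizer of `A_m^{(k)}` permutes the orbitals of `A_m^{(k)}`. Since
`m ≥ 5`, `Alt(m)` is transitive on pairs of `k`-sets with a given intersection size, so
`|π B ∩ π C|` depends only on `|B ∩ C|`. Comparing the suborbit sizes `C(k, i) C(m - k, k - i)`
shows that `π` maps the relation `|B ∩ C| = k - 1` to itself or to disjointness; disjointness is
impossible, since `π` would turn the `m - k + 1` pairwise adjacent `k`-sets through a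
`(k - 1)`-set into pairwise disjoint `k`-subsets of `Fin m`. Hence `π` is an automorphism of the
Johnson graph `J(m, k)`. For `2k < m` every such automorphism comes from `Sym(m)`: a clique of
size `m - k + 1` in `J(m, k)` is the star of all `k`-sets through some `(k - 1)`-set, so the
automorphism induces one of `J(m, k - 1)`, and induction on `k` ends at `Ω_{m,1} ≃ Fin m`.
-/

open Finset Equiv

section Alternating

variable {α β : Type*} [Fintype α] [DecidableEq β]

theorem Equiv.Perm.exists_comp_eq_of_card_fiber_eq (c c' : α → β)
    (h : ∀ b, #{x | c x = b} = #{x | c' x = b}) : ∃ σ : Perm α, c' ∘ σ = c := by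
  have e : ∀ b, {x // c x = b} ≃ {x // c' x = b} := fun b =>
    Fintype.equivOfCardEq (by rw [Fintype.card_subtype, Fintype.card_subtype, h])
  exact ⟨Equiv.ofFiberEquiv e, funext (Equiv.ofFiberEquiv_map e)⟩

theorem Equiv.Perm.exists_mem_alternatingGroup_comp_eq [DecidableEq α] [Fintype β]
    (hβ : Fintype.card β < Fintype.card α) (c c' : α → β)
    (h : ∀ b, #{x | c x = b} = #{x | c' x = b}) :
    ∃ σ ∈ alternatingGroup α, c' ∘ σ = c := by
  obtain ⟨σ, hσ⟩ := exists_comp_eq_of_card_fiber_eq c c' h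
  rcases Int.units_eq_one_or (Perm.sign σ) with hs | hs
  · exact ⟨σ, hs, hσ⟩
  -- a transposition inside one fiber of `c` corrects the sign without changing `c' ∘ σ`
  obtain ⟨x, y, hxy, hc⟩ := Fintype.exists_ne_map_eq_of_card_lt c hβ
  refine ⟨σ * swap x y, by simp [Perm.mem_alternatingGroup, hs, hxy], ?_⟩
  ext z
  rw [Perm.coe_mul, ← Function.comp_assoc, hσ]
  simp only [Function.comp_apply, swap_apply_def]
  split_ifs <;> simp [*]

theorem Finset.exists_mem_alternatingGroup_smul_eq_smul_eq [DecidableEq α]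
    (hα : 4 < Fintype.card α) {B C B' C' : Finset α} (hB : #B = #B') (hC : #C = #C')
    (hBC : #(B ∩ C) = #(B' ∩ C')) :
    ∃ σ ∈ alternatingGroup α, σ • B = B' ∧ σ • C = C' := by
  have hCB : #(C ∩ B) = #(C' ∩ B') := by rwa [inter_comm, inter_comm C']
  have fiber : ∀ b : Bool × Bool, #{x | ((x ∈ B : Bool), (x ∈ C : Bool)) = b} =
      #{x | ((x ∈ B' : Bool), (x ∈ C' : Bool)) = b} := by
    rintro ⟨_ | _, _ | _⟩ <;>
      simp only [Prod.mk.injEq, decide_eq_true_iff, decide_eq_false_iff_not, filter_and,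
        filter_not, filter_mem_eq_inter, univ_inter, ← compl_eq_univ_sdiff, inter_comm Bᶜ,
        inter_comm B'ᶜ, ← sdiff_eq_inter_compl, card_sdiff, card_compl] <;>
      omega
  obtain ⟨σ, hσ, hc⟩ := Perm.exists_mem_alternatingGroup_comp_eq (by simpa using hα) _ _ fiber
  have hmem : ∀ x, (σ x ∈ B' ↔ x ∈ B) ∧ (σ x ∈ C' ↔ x ∈ C) := fun x => by
    simpa using congrFun hc x
  refine ⟨σ, hσ, ?_, ?_⟩ <;> rw [smul_eq_iff_eq_inv_smul, eq_comm] <;> ext x <;>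
    simp [mem_inv_smul_finset_iff, hmem]

end Alternating

theorem Finset.card_filter_powersetCard_card_inter {α : Type*} [DecidableEq α] {s u : Finset α}
    (hsu : s ⊆ u) {j k : ℕ} (hjk : j ≤ k) :
    #{t ∈ u.powersetCard k | #(s ∩ t) = j} = (#s).choose j * (#u - #s).choose (k - j) := by
  rw [← card_sdiff_of_subset hsu, ← card_powersetCard, ← card_powersetCard, ← card_product]
  refine card_nbij' (fun t => (s ∩ t, t \ s)) (fun p => p.1 ∪ p.2) ?_ ?_ ?_ ?_
  · intro t ht
    simp only [mem_coe, mem_filter, mem_powersetCard, mem_product] at ht ⊢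
    refine ⟨⟨inter_subset_left, ht.2⟩, sdiff_subset_sdiff ht.1.1 le_rfl, ?_⟩
    rw [card_sdiff, ht.1.2, ht.2]
  · rintro ⟨a, b⟩ hab
    simp only [mem_coe, mem_filter, mem_powersetCard, mem_product] at hab ⊢
    obtain ⟨⟨has, ha⟩, hbu, hb⟩ := hab
    have hbs := (subset_sdiff.mp hbu).2
    have hsab : s ∩ (a ∪ b) = a := by
      rw [inter_union_distrib_left, inter_eq_right.mpr has,
        disjoint_iff_inter_eq_empty.mp hbs.symm, union_empty]
    refine ⟨⟨union_subset (has.trans hsu) (hbu.trans sdiff_subset), ?_⟩, by rw [hsab, ha]⟩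
    rw [card_union_of_disjoint (disjoint_of_subset_left has hbs.symm), ha, hb]
    omega
  · intro t _
    ext x
    simp only [mem_union, mem_inter, mem_sdiff]
    tauto
  · rintro ⟨a, b⟩ hab
    simp only [mem_coe, mem_product, mem_powersetCard] at hab
    obtain ⟨⟨has, -⟩, hbu, -⟩ := hab
    have hbs := (subset_sdiff.mp hbu).2
    ext x <;> simp only [mem_inter, mem_union, mem_sdiff]
    · exact ⟨fun h => h.2.resolve_right fun hb => disjoint_left.mp hbs hb h.1,
        fun ha => ⟨has ha, .inl ha⟩⟩
    · exact ⟨fun h => h.1.resolve_left fun ha => h.2 (has ha),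
        fun hb => ⟨.inr hb, disjoint_left.mp hbs hb⟩⟩

theorem Nat.self_le_choose {n r : ℕ} (hr : 0 < r) (hrn : r < n) : n ≤ n.choose r := by
  induction n generalizing r with
  | zero => omega
  | succ n ih =>
    obtain ⟨r, rfl⟩ := Nat.exists_eq_add_of_lt hr
    rw [zero_add, Nat.choose_succ_succ']
    rcases Nat.eq_zero_or_pos r with rfl | hr'
    · simp
    · have := ih hr' (by omega)
      have := Nat.choose_pos (show r + 1 ≤ n by omega)
      omega

theorem Nat.self_lt_choose {n r : ℕ} (hr : 2 ≤ r) (hrn : r + 2 ≤ n) : n < n.choose r := by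
  obtain ⟨n, rfl⟩ := Nat.exists_eq_add_of_le' (show 1 ≤ n by omega)
  obtain ⟨r, rfl⟩ := Nat.exists_eq_add_of_le' (show 1 ≤ r by omega)
  rw [Nat.choose_succ_succ']
  have := Nat.self_le_choose (n := n) (r := r) (by omega) (by omega)
  have := Nat.self_le_choose (n := n) (r := r + 1) (by omega) (by omega)
  omega

theorem Nat.mul_lt_choose_mul_choose {k n i : ℕ} (hi : 0 < i) (hik : i + 2 ≤ k) (hkn : k < n) :
    k * n < k.choose i * n.choose (k - i) :=
  Nat.mul_lt_mul_of_le_of_lt (Nat.self_le_choose hi (by omega))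
    (Nat.self_lt_choose (by omega) (by omega)) (Nat.choose_pos (by omega))

theorem Finset.subset_or_subset_union_of_card_inter {α : Type*} [DecidableEq α] {K : ℕ}
    {B₁ B₂ D : Finset α} (hD : #D = K + 1) (h₁₂ : #(B₁ ∩ B₂) = K) (h₁ : #(D ∩ B₁) = K)
    (h₂ : #(D ∩ B₂) = K) : B₁ ∩ B₂ ⊆ D ∨ D ⊆ B₁ ∪ B₂ := by
  refine or_iff_not_imp_left.mpr fun hS => ?_
  -- `D` meets the `K`-set `B₁ ∩ B₂` in fewer than `K` points, so it meets `B₁ ∪ B₂` in `K + 1`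
  have hlt : #(D ∩ B₁ ∩ (D ∩ B₂)) < K := by
    rw [← inter_inter_distrib_left, ← h₁₂]
    exact card_lt_card (ssubset_of_subset_of_ne inter_subset_right
      fun h => hS (h ▸ inter_subset_left))
  have hunion := card_union_add_card_inter (D ∩ B₁) (D ∩ B₂)
  rw [← inter_union_distrib_left] at hunion
  exact inter_eq_left.mp (eq_of_subset_of_card_le inter_subset_left (by omega))

def johnsonGraph (m k : ℕ) : SimpleGraph (KSubsets m k) where
  Adj B C := #(B.1 ∩ C.1) + 1 = k
  symm := ⟨fun B C h => by rwa [inter_comm]⟩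
  loopless := ⟨fun B h => by simp [B.2] at h⟩

namespace KSubsets

variable {m k : ℕ}

@[simp]
lemma val_smul (g : Perm (Fin m)) (B : KSubsets m k) : (g • B).1 = g • B.1 := rfl

lemma card_filter_val (p : Finset (Fin m) → Prop) [DecidablePred p] :
    #{B : KSubsets m k | p B.1} = #{t ∈ univ.powersetCard k | p t} := by
  refine card_bij (fun B _ => B.1) ?_ (fun _ _ _ _ => Subtype.ext) ?_
  · intro B hB
    simp only [mem_filter, mem_univ, true_and, mem_powersetCard, subset_univ] at hB ⊢
    exact ⟨B.2, hB⟩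
  · intro t ht
    simp only [mem_filter, mem_powersetCard, subset_univ, true_and] at ht
    exact ⟨⟨t, ht.1⟩, by simpa using ht.2, rfl⟩

lemma card_filter_card_inter (S : Finset (Fin m)) {j : ℕ} (hjk : j ≤ k) :
    #{B : KSubsets m k | #(S ∩ B.1) = j} = (#S).choose j * (m - #S).choose (k - j) := by
  rw [card_filter_val (fun t => #(S ∩ t) = j),
    card_filter_powersetCard_card_inter (subset_univ S) hjk, card_univ, Fintype.card_fin]

variable (k) in
def supersets (S : Finset (Fin m)) : Finset (KSubsets m k) := {B | S ⊆ B.1}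

@[simp]
lemma mem_supersets {S : Finset (Fin m)} {B : KSubsets m k} : B ∈ supersets k S ↔ S ⊆ B.1 := by
  simp [supersets]

lemma card_supersets {S : Finset (Fin m)} (hS : #S ≤ k) :
    #(supersets k S) = (m - #S).choose (k - #S) := by
  rw [supersets, card_filter_val (S ⊆ ·),
    card_filter_powersetCard_subset _ _ _ (subset_univ S) hS, card_univ, Fintype.card_fin]

lemma card_inter_lt_of_ne {B C : KSubsets m k} (hBC : B ≠ C) : #(B.1 ∩ C.1) < k := by
  refine ((card_le_card inter_subset_left).trans_eq B.2).lt_of_ne fun h => hBC ?_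
  have hB : B.1 ∩ C.1 = B.1 := eq_of_subset_of_card_le inter_subset_left (by rw [h, B.2])
  exact Subtype.ext (eq_of_subset_of_card_le (inter_eq_left.mp hB) (by rw [B.2, C.2]))

lemma isClique_supersets {S : Finset (Fin m)} (hS : #S + 1 = k) :
    (johnsonGraph m k).IsClique (supersets k S : Set (KSubsets m k)) := by
  intro B hB C hC hBC
  simp only [mem_coe, mem_supersets] at hB hC
  have := card_le_card (subset_inter hB hC)
  have := card_inter_lt_of_ne hBC
  change #(B.1 ∩ C.1) + 1 = k
  omega

lemma exists_subset_supersets_of_isClique {K : ℕ} {G : Finset (KSubsets m (K + 1))}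
    (hG : (johnsonGraph m (K + 1)).IsClique (G : Set (KSubsets m (K + 1))))
    (hcard : K + 3 ≤ #G) :
    ∃ T : KSubsets m K, G ⊆ supersets (K + 1) T.1 := by
  have adj : ∀ B ∈ G, ∀ C ∈ G, B ≠ C → #(B.1 ∩ C.1) = K := fun B hB C hC hBC =>
    Nat.succ_injective (hG hB hC hBC)
  obtain ⟨B₁, hB₁, B₂, hB₂, h₁₂⟩ := one_lt_card.mp (by omega : 1 < #G)
  set S := B₁.1 ∩ B₂.1
  have hS : #S = K := adj B₁ hB₁ B₂ hB₂ h₁₂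
  -- otherwise some `B₃ ∈ G` does not contain `S`, and then all of `G` lies in `U = B₁ ∪ B₂`,
  -- which has only `K + 2` subsets of size `K + 1`
  by_contra! hno
  obtain ⟨B₃, hB₃, hSB₃⟩ := not_subset.mp (hno ⟨S, hS⟩)
  replace hSB₃ : ¬ S ⊆ B₃.1 := by simpa using hSB₃
  set U := B₁.1 ∪ B₂.1 with hU_def
  have hsub : ∀ {B D}, B ∈ G → D ∈ G → ¬ D.1 ⊆ U → B.1 ⊆ U → #(D.1 ∩ B.1) = K :=
    fun hB hD hDU hBU => adj _ hD _ hB fun h => hDU (h ▸ hBU)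
  have h₃U : B₃.1 ⊆ U :=
    (subset_or_subset_union_of_card_inter B₃.2 hS
      (adj _ hB₃ _ hB₁ fun h => hSB₃ (h ▸ inter_subset_left))
      (adj _ hB₃ _ hB₂ fun h => hSB₃ (h ▸ inter_subset_right))).resolve_left hSB₃
  -- a member `D ⊄ U` would contain both `S` and `B₁ ∩ B₃`, two distinct `K`-subsets of `B₁`
  have hall : ∀ D ∈ G, D.1 ⊆ U := by
    intro D hD
    by_contra hDU
    have h₁ := hsub hB₁ hD hDU subset_union_left
    have hS_D := (subset_or_subset_union_of_card_inter D.2 hS h₁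
      (hsub hB₂ hD hDU subset_union_right)).resolve_right hDU
    have h₁₃_D := (subset_or_subset_union_of_card_inter D.2
      (adj _ hB₁ _ hB₃ fun h => hSB₃ (h ▸ inter_subset_left)) h₁
      (hsub hB₃ hD hDU h₃U)).resolve_right
      fun h => hDU (h.trans (union_subset subset_union_left h₃U))
    rw [inter_comm] at h₁
    have e₁ := eq_of_subset_of_card_le (subset_inter inter_subset_left hS_D) (by rw [h₁, hS])
    have e₂ := eq_of_subset_of_card_le (subset_inter inter_subset_left h₁₃_D)
      (by rw [h₁, adj _ hB₁ _ hB₃ fun h => hSB₃ (h ▸ inter_subset_left)])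
    exact hSB₃ ((e₁.trans e₂.symm).subset.trans inter_subset_right)
  have hU : #U = K + 2 := by
    have := card_union_add_card_inter B₁.1 B₂.1
    rw [B₁.2, B₂.2, hS, ← hU_def] at this
    omega
  have := card_le_card_of_injOn Subtype.val
    (fun D hD => mem_powersetCard.mpr ⟨hall D hD, D.2⟩) Subtype.val_injective.injOn
  rw [card_powersetCard, hU, Nat.choose_succ_self_right] at this
  omega

lemma eq_inter_of_mem_supersets {K : ℕ} {S : KSubsets m K} {B C : KSubsets m (K + 1)}
    (hB : B ∈ supersets (K + 1) S.1) (hC : C ∈ supersets (K + 1) S.1) (hBC : B ≠ C) :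
    S.1 = B.1 ∩ C.1 := by
  rw [mem_supersets] at hB hC
  have := card_inter_lt_of_ne hBC
  exact eq_of_subset_of_card_le (subset_inter hB hC) (by rw [S.2]; omega)

lemma eq_of_supersets_eq {K : ℕ} (hKm : K + 2 ≤ m) {S T : KSubsets m K}
    (h : supersets (K + 1) S.1 = supersets (K + 1) T.1) : S = T := by
  have hcard : 1 < #(supersets (K + 1) S.1) := by
    rw [card_supersets (by rw [S.2]; omega), S.2, Nat.add_sub_cancel_left, Nat.choose_one_right]
    omega
  obtain ⟨B, hB, C, hC, hBC⟩ := one_lt_card.mp hcard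
  exact Subtype.ext ((eq_inter_of_mem_supersets hB hC hBC).trans
    (eq_inter_of_mem_supersets (h ▸ hB) (h ▸ hC) hBC).symm)

lemma johnsonGraph_adj_iff_supersets_inter_nonempty {K : ℕ} {S T : KSubsets m K} :
    (johnsonGraph m K).Adj S T ↔
      S ≠ T ∧ (supersets (K + 1) S.1 ∩ supersets (K + 1) T.1).Nonempty := by
  have hunion := card_union_add_card_inter S.1 T.1
  rw [S.2, T.2] at hunion
  refine ⟨fun h => ⟨(johnsonGraph m K).ne_of_adj h, ⟨⟨S.1 ∪ T.1, ?_⟩, ?_⟩⟩, ?_⟩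
  · change #(S.1 ∩ T.1) + 1 = K at h
    omega
  · simp [subset_union_left, subset_union_right]
  · rintro ⟨hST, B, hB⟩
    simp only [mem_inter, mem_supersets] at hB
    have := card_le_card (union_subset hB.1 hB.2)
    have := card_inter_lt_of_ne hST
    change #(S.1 ∩ T.1) + 1 = K
    omega

lemma exists_iso_image_supersets_eq {K : ℕ} (hKm : 2 * K + 3 ≤ m)
    (φ : johnsonGraph m (K + 1) ≃g johnsonGraph m (K + 1)) :
    ∃ ψ : johnsonGraph m K ≃g johnsonGraph m K,
      ∀ S, (supersets (K + 1) S.1).image φ = supersets (K + 1) (ψ S).1 := by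
  have hcard : ∀ S : KSubsets m K, #(supersets (K + 1) S.1) = m - K := fun S => by
    rw [card_supersets (by rw [S.2]; omega), S.2, Nat.add_sub_cancel_left, Nat.choose_one_right]
  have hT : ∀ S : KSubsets m K, ∃ T : KSubsets m K,
      (supersets (K + 1) S.1).image φ = supersets (K + 1) T.1 := by
    intro S
    have hclique : (johnsonGraph m (K + 1)).IsClique
        ((supersets (K + 1) S.1).image φ : Set (KSubsets m (K + 1))) := by
      rw [coe_image]
      rintro _ ⟨B, hB, rfl⟩ _ ⟨C, hC, rfl⟩ hBC
      exact φ.map_adj_iff.mpr (isClique_supersets (by rw [S.2]) hB hC (ne_of_apply_ne φ hBC))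
    have himage : #((supersets (K + 1) S.1).image φ) = m - K := by
      rw [card_image_of_injective _ φ.injective, hcard]
    obtain ⟨T, hT⟩ := exists_subset_supersets_of_isClique hclique (by omega)
    exact ⟨T, eq_of_subset_of_card_le hT (by rw [himage, hcard])⟩
  choose ψ hψ using hT
  have hψinj : Function.Injective ψ := fun S S' h => eq_of_supersets_eq (by omega)
    (image_injective φ.injective ((hψ S).trans (h ▸ (hψ S').symm)))
  refine ⟨⟨Equiv.ofBijective ψ (Finite.injective_iff_bijective.mp hψinj), ?_⟩, hψ⟩
  intro S T
  simp only [Equiv.ofBijective_apply, johnsonGraph_adj_iff_supersets_inter_nonempty, ← hψ,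
    ← image_inter _ _ φ.injective, image_nonempty, hψinj.ne_iff]

lemma apply_eq_smul_of_image_supersets_eq {K : ℕ} (hK : 1 ≤ K)
    (φ : johnsonGraph m (K + 1) ≃g johnsonGraph m (K + 1)) (σ : Perm (Fin m))
    (h : ∀ S : KSubsets m K, (supersets (K + 1) S.1).image φ = supersets (K + 1) (σ • S).1)
    (B : KSubsets m (K + 1)) : φ B = σ • B := by
  have hcard : #(φ B).1 ≤ #(σ • B).1 := by rw [val_smul, card_smul_finset, B.2, (φ B).2]
  refine Subtype.ext (eq_of_subset_of_card_le (fun y hy => ?_) hcard).symm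
  obtain ⟨x, hx, rfl⟩ := mem_smul_finset.mp hy
  -- `x` lies in the `K`-subset `B \ {z}` for any other point `z` of `B`
  obtain ⟨z, hz, hzx⟩ := exists_mem_ne (by rw [B.2]; omega) x
  let S : KSubsets m K := ⟨B.1.erase z, by rw [card_erase_of_mem hz, B.2, Nat.add_sub_cancel]⟩
  have hφB : φ B ∈ supersets (K + 1) (σ • S).1 :=
    h S ▸ mem_image_of_mem φ (mem_supersets.mpr (erase_subset z B.1))
  exact mem_supersets.mp hφB (smul_mem_smul_finset (mem_erase.mpr ⟨hzx.symm, hx⟩))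

lemma exists_perm_apply_eq_smul_one (φ : Perm (KSubsets m 1)) :
    ∃ σ : Perm (Fin m), ∀ B, φ B = σ • B := by
  let e : Fin m ≃ KSubsets m 1 := Set.powersetCard.ofSingleton (α := Fin m)
  refine ⟨(e.trans φ).trans e.symm, fun B => ?_⟩
  obtain ⟨x, rfl⟩ := e.surjective B
  refine Subtype.ext ?_
  change _ = _ • {x}
  rw [smul_finset_singleton]
  exact congrArg Subtype.val (e.apply_symm_apply (φ (e x))).symm

theorem exists_perm_apply_eq_smul_of_johnsonGraph_iso (hk : 1 ≤ k) (hkm : 2 * k < m)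
    (φ : johnsonGraph m k ≃g johnsonGraph m k) : ∃ σ : Perm (Fin m), ∀ B, φ B = σ • B := by
  induction k, hk using Nat.le_induction with
  | base => exact exists_perm_apply_eq_smul_one φ.toEquiv
  | succ K hK ih =>
    obtain ⟨ψ, hψ⟩ := exists_iso_image_supersets_eq (by omega) φ
    obtain ⟨σ, hσ⟩ := ih (by omega) ψ
    exact ⟨σ, apply_eq_smul_of_image_supersets_eq hK φ σ fun S => (hψ S).trans (by rw [hσ])⟩

lemma exists_mem_alternatingGroup_smul_eq_smul_eq (hm : 5 ≤ m) {B C B' C' : KSubsets m k}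
    (h : #(B.1 ∩ C.1) = #(B'.1 ∩ C'.1)) :
    ∃ g ∈ alternatingGroup (Fin m), g • B = B' ∧ g • C = C' := by
  obtain ⟨g, hg, hB, hC⟩ := Finset.exists_mem_alternatingGroup_smul_eq_smul_eq
    (by rwa [Fintype.card_fin]) (B.2.trans B'.2.symm) (C.2.trans C'.2.symm) h
  exact ⟨g, hg, Subtype.ext hB, Subtype.ext hC⟩

variable {π : Perm (KSubsets m k)}

lemma exists_apply_smul_eq_smul_apply
    (hπ : π ∈ Subgroup.normalizer (Subgroup.map (ksubsetsHom m k) (alternatingGroup (Fin m))))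
    {g : Perm (Fin m)} (hg : g ∈ alternatingGroup (Fin m)) :
    ∃ g' ∈ alternatingGroup (Fin m), ∀ B, π (g • B) = g' • π B := by
  obtain ⟨g', hg', he⟩ := (Subgroup.mem_normalizer_iff.mp hπ _).mp ⟨g, hg, rfl⟩
  refine ⟨g', hg', fun B => ?_⟩
  have := congrArg (· (π B)) he
  simpa [ksubsetsHom] using this.symm

lemma card_inter_apply_eq_of_mem_normalizer (hm : 5 ≤ m)
    (hπ : π ∈ Subgroup.normalizer (Subgroup.map (ksubsetsHom m k) (alternatingGroup (Fin m))))
    {B C B' C' : KSubsets m k} (h : #(B.1 ∩ C.1) = #(B'.1 ∩ C'.1)) :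
    #((π B).1 ∩ (π C).1) = #((π B').1 ∩ (π C').1) := by
  obtain ⟨g, hg, rfl, rfl⟩ := exists_mem_alternatingGroup_smul_eq_smul_eq hm h
  obtain ⟨g', -, hg'⟩ := exists_apply_smul_eq_smul_apply hπ hg
  rw [hg', hg', val_smul, val_smul, ← smul_finset_inter, card_smul_finset]

lemma card_inter_apply_eq_iff_of_mem_normalizer (hm : 5 ≤ m)
    (hπ : π ∈ Subgroup.normalizer (Subgroup.map (ksubsetsHom m k) (alternatingGroup (Fin m))))
    {B C B' C' : KSubsets m k} :
    #((π B).1 ∩ (π C).1) = #((π B').1 ∩ (π C').1) ↔ #(B.1 ∩ C.1) = #(B'.1 ∩ C'.1) :=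
  ⟨fun h => by simpa using card_inter_apply_eq_of_mem_normalizer hm (inv_mem hπ) h,
    card_inter_apply_eq_of_mem_normalizer hm hπ⟩

lemma card_inter_apply_ne_zero_of_mem_normalizer (hm : 5 ≤ m) (hk : 2 ≤ k) (hkm : k < m)
    (hπ : π ∈ Subgroup.normalizer (Subgroup.map (ksubsetsHom m k) (alternatingGroup (Fin m))))
    {B C : KSubsets m k} (hBC : (johnsonGraph m k).Adj B C) : #((π B).1 ∩ (π C).1) ≠ 0 := by
  intro h0
  change #(B.1 ∩ C.1) + 1 = k at hBC
  -- `π` would map the clique of `k`-sets through `B ∩ C` to `m - k + 1` disjoint `k`-sets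
  set F := supersets k (B.1 ∩ C.1)
  have hF : #F = m - k + 1 := by
    rw [card_supersets (by omega), show k - #(B.1 ∩ C.1) = 1 by omega, Nat.choose_one_right]
    omega
  have hdisj : (F : Set (KSubsets m k)).PairwiseDisjoint fun D => (π D).1 := by
    intro D hD E hE hDE
    have hadj : #(D.1 ∩ E.1) + 1 = k := isClique_supersets hBC hD hE hDE
    rw [Function.onFun, disjoint_iff_inter_eq_empty, ← card_eq_zero, ← h0]
    exact card_inter_apply_eq_of_mem_normalizer hm hπ (by omega)
  have := card_le_univ (F.biUnion fun D => (π D).1)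
  rw [card_biUnion hdisj, sum_congr rfl fun D _ => (π D).2, sum_const, smul_eq_mul, hF,
    Fintype.card_fin] at this
  obtain ⟨n, rfl⟩ := Nat.exists_eq_add_of_lt hkm
  rw [show k + n + 1 - k + 1 = n + 2 by omega] at this
  nlinarith

lemma johnsonGraph_adj_apply_of_mem_normalizer (hm : 5 ≤ m) (hkm : 2 * k < m)
    (hπ : π ∈ Subgroup.normalizer (Subgroup.map (ksubsetsHom m k) (alternatingGroup (Fin m))))
    {B C : KSubsets m k} (hBC : (johnsonGraph m k).Adj B C) :
    (johnsonGraph m k).Adj (π B) (π C) := by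
  change #(B.1 ∩ C.1) + 1 = k at hBC
  change #((π B).1 ∩ (π C).1) + 1 = k
  have hlt := card_inter_lt_of_ne (π.injective.ne ((johnsonGraph m k).ne_of_adj hBC))
  set i := #((π B).1 ∩ (π C).1)
  rcases (by omega : i + 1 = k ∨ (i = 0 ∧ 2 ≤ k) ∨ (0 < i ∧ i + 2 ≤ k)) with
    h | ⟨hi, hk⟩ | ⟨hi, hik⟩
  · exact h
  · exact absurd hi (card_inter_apply_ne_zero_of_mem_normalizer hm hk (by omega) hπ hBC)
  -- `π` maps the `k (m - k)` neighbours of `B` onto the sets meeting `π B` in `i` points,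
  -- of which there are more
  · have hval : #{D : KSubsets m k | #((π B).1 ∩ D.1) = i} =
        #{D : KSubsets m k | #(B.1 ∩ D.1) = #(B.1 ∩ C.1)} :=
      (card_equiv π fun D => by
        simpa only [mem_filter, mem_univ, true_and] using
          (card_inter_apply_eq_iff_of_mem_normalizer hm hπ).symm).symm
    rw [card_filter_card_inter _ hlt.le, card_filter_card_inter _ (by omega), (π B).2, B.2,
      show #(B.1 ∩ C.1) = k - 1 by omega, Nat.choose_symm (by omega), Nat.choose_one_right,
      show k - (k - 1) = 1 by omega, Nat.choose_one_right] at hval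
    exact absurd hval (Nat.mul_lt_choose_mul_choose hi hik (by omega)).ne'

lemma johnsonGraph_adj_apply_iff_of_mem_normalizer (hm : 5 ≤ m) (hkm : 2 * k < m)
    (hπ : π ∈ Subgroup.normalizer (Subgroup.map (ksubsetsHom m k) (alternatingGroup (Fin m))))
    {B C : KSubsets m k} : (johnsonGraph m k).Adj (π B) (π C) ↔ (johnsonGraph m k).Adj B C :=
  ⟨fun h => by simpa using johnsonGraph_adj_apply_of_mem_normalizer hm hkm (inv_mem hπ) h,
    johnsonGraph_adj_apply_of_mem_normalizer hm hkm hπ⟩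

end KSubsets

/-- For `m ≥ 5`, `1 ≤ k`, `2k < m`, the normalizer of `A_m^{(k)}` in the full
symmetric group on `k`-subsets is `S_m^{(k)}`. -/
theorem normalizer_AmK_eq_SmK (m k : ℕ) (hm : 5 ≤ m) (hk : 1 ≤ k) (hkm : 2 * k < m) :
    Subgroup.normalizer
        (Subgroup.map (ksubsetsHom m k) (alternatingGroup (Fin m)))
      = Subgroup.map (ksubsetsHom m k) ⊤ := by
  refine le_antisymm (fun π hπ => ?_) ?_
  · obtain ⟨σ, hσ⟩ := KSubsets.exists_perm_apply_eq_smul_of_johnsonGraph_iso hk hkm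
      ⟨π, KSubsets.johnsonGraph_adj_apply_iff_of_mem_normalizer hm hkm hπ⟩
    exact ⟨σ, trivial, Equiv.ext fun B => (hσ B).symm⟩
  · rw [← Subgroup.normalizer_eq_top (H := alternatingGroup (Fin m))]
    exact Subgroup.le_normalizer_map _
end

section
/- Let m ≥ 5 and k ≥ 1 with 2k < m, and let H be a nontrivial subgroup of Sym(Ω_{m,k}) whose normalizer N in Sym(Ω_{m,k}) satisfies A_m^{(k)} ≤ N ≤ S_m^{(k)}. Then A_m^{(k)} ≤ H and soc(H) = A_m^{(k)}. -/
open Pointwise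

/-! The map `φ_{m,k}` is injective for `0 < k < m`, so `A = A_m^{(k)} ≅ Alt(m)` is simple and its
centralizer in `S_m^{(k)} ≅ Sym(m)` is trivial (that centralizer is normal in `Sym(m)`, so if it
were nontrivial it would contain `Alt(m)`, which has trivial center). As `H ≤ N ≤ S_m^{(k)}`, the
subgroups `H` and `A` normalize each other, so `⁅H, A⁆ ≤ H ⊓ A`. By simplicity `H ⊓ A` is `1` or
`A`; in the first case `H` centralizes `A`, forcing `H = 1`. Hence `A` is a simple normal subgroup
of `H` with trivial centralizer in `H`: it is minimal normal, and any minimal normal `M` of `H`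
meets it nontrivially (otherwise `⁅M, A⁆ = 1`), so `M ≤ A`. -/

open Subgroup

namespace Subgroup

variable {G : Type*} [Group G] {A H : Subgroup G}

theorem commutator_le_inf_of_le_normalizer (hHA : H ≤ normalizer (A : Set G))
    (hAH : A ≤ normalizer (H : Set G)) : ⁅H, A⁆ ≤ H ⊓ A :=
  le_inf (commutator_comm A H ▸ le_normalizer_iff_commutator_le_right.mp hAH)
    (le_normalizer_iff_commutator_le_right.mp hHA)

theorem le_centralizer_of_inf_eq_bot_s5 (hHA : H ≤ normalizer (A : Set G))
    (hAH : A ≤ normalizer (H : Set G)) (h : H ⊓ A = ⊥) : H ≤ centralizer (A : Set G) :=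
  commutator_eq_bot_iff_le_centralizer.mp
    (le_bot_iff.mp (h ▸ commutator_le_inf_of_le_normalizer hHA hAH))

theorem le_of_isSimpleGroup_of_le_normalizer [IsSimpleGroup A]
    (hHA : H ≤ normalizer (A : Set G)) (hAH : A ≤ normalizer (H : Set G))
    (hC : H ⊓ centralizer (A : Set G) = ⊥) (hH : H ≠ ⊥) : A ≤ H := by
  rcases (normal_subgroupOf_of_le_normalizer hAH).eq_bot_or_eq_top with h | h
  · refine absurd ?_ hH
    rw [← hC, left_eq_inf]
    exact le_centralizer_of_inf_eq_bot_s5 hHA hAH (disjoint_iff.mp (subgroupOf_eq_bot.mp h))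
  · exact subgroupOf_eq_top.mp h

theorem centralizer_subgroupOf_eq_bot_s5 (hAH : A ≤ H) (hC : H ⊓ centralizer (A : Set G) = ⊥) :
    centralizer (A.subgroupOf H : Set H) = ⊥ := by
  refine eq_bot_iff.mpr fun x hx => ?_
  have hxA : (x : G) ∈ centralizer (A : Set G) := fun a ha =>
    congrArg Subtype.val (hx ⟨a, hAH ha⟩ (mem_subgroupOf.mpr ha))
  have : (x : G) ∈ (⊥ : Subgroup G) := hC ▸ mem_inf.mpr ⟨x.2, hxA⟩
  exact mem_bot.mpr (Subtype.ext (mem_bot.mp this))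

theorem inf_centralizer_map_eq_bot {G' : Type*} [Group G'] {f : G →* G'}
    (hf : Function.Injective f) {K : Subgroup G} (hK : centralizer (K : Set G) = ⊥) :
    (⊤ : Subgroup G).map f ⊓ centralizer (K.map f : Set G') = ⊥ := by
  refine eq_bot_iff.mpr fun x hx => ?_
  obtain ⟨⟨g, -, rfl⟩, hg⟩ := mem_inf.mp hx
  have : g ∈ centralizer (K : Set G) := fun a ha =>
    hf (by simpa only [map_mul] using hg (f a) ⟨a, ha, rfl⟩)
  rw [hK, mem_bot] at this
  rw [this, map_one]
  exact one_mem _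

end Subgroup

section Socle

variable {G : Type*} [Group G] {A M : Subgroup G}

theorem isMinimalNormal_of_isSimpleGroup [A.Normal] [IsSimpleGroup A] : IsMinimalNormal A := by
  refine ⟨inferInstance, (nontrivial_iff_ne_bot A).mp inferInstance, fun K hK hKA => ?_⟩
  rcases (hK.subgroupOf A).eq_bot_or_eq_top with h | h
  · exact Or.inl ((subgroupOf_eq_bot.mp h).eq_bot_of_le hKA)
  · exact Or.inr (hKA.antisymm (subgroupOf_eq_top.mp h))

theorem IsMinimalNormal.le_of_centralizer_eq_bot_s5 [hA : A.Normal]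
    (hC : centralizer (A : Set G) = ⊥) (hM : IsMinimalNormal M) : M ≤ A := by
  obtain ⟨hMn, hMbot, hmin⟩ := hM
  have hMA : M ≤ normalizer (A : Set G) := le_top.trans (normalizer_eq_top_iff.mpr hA).ge
  have hAM : A ≤ normalizer (M : Set G) := le_top.trans (normalizer_eq_top_iff.mpr hMn).ge
  rcases hmin (M ⊓ A) (normal_inf_normal M A) inf_le_left with h | h
  · exact absurd (le_bot_iff.mp (hC ▸ le_centralizer_of_inf_eq_bot_s5 hMA hAM h)) hMbot
  · exact inf_eq_left.mp h

theorem socle_eq_of_isMinimalNormal (hA : IsMinimalNormal A) (hC : centralizer (A : Set G) = ⊥) :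
    socle G = A :=
  have := hA.1
  le_antisymm (sSup_le fun _ hM => hM.le_of_centralizer_eq_bot_s5 hC) (le_sSup hA)

theorem map_subtype_socle_eq {H : Subgroup G} [IsSimpleGroup A] (hAH : A ≤ H)
    (hHA : H ≤ normalizer (A : Set G)) (hC : H ⊓ centralizer (A : Set G) = ⊥) :
    (socle H).map H.subtype = A := by
  have := normal_subgroupOf_of_le_normalizer hHA
  have := (subgroupOfEquivOfLe hAH).isSimpleGroup
  rw [socle_eq_of_isMinimalNormal isMinimalNormal_of_isSimpleGroup
    (centralizer_subgroupOf_eq_bot_s5 hAH hC), subgroupOf_map_subtype, inf_of_le_left hAH]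

end Socle

theorem Equiv.Perm.centralizer_alternatingGroup_eq_bot {α : Type*} [Fintype α] [DecidableEq α]
    (hα : 5 ≤ Nat.card α) : centralizer (alternatingGroup α : Set (Equiv.Perm α)) = ⊥ := by
  by_contra hC
  have hle := alternatingGroup_le_of_normal hα ((nontrivial_iff_ne_bot _).mpr hC)
  have hcenter : center (alternatingGroup α) = ⊤ :=
    eq_top_iff.mpr fun g _ => mem_center_iff.mpr fun h => Subtype.ext (hle g.2 h h.2)
  have : Nontrivial (alternatingGroup α) := (alternatingGroup.isSimpleGroup hα).toNontrivial
  exact bot_ne_top ((alternatingGroup.center_eq_bot (α := α) (by omega)).symm.trans hcenter)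

theorem ksubsetsHom_injective {m k : ℕ} (hk : 1 ≤ k) (hkm : k < m) :
    Function.Injective (ksubsetsHom m k) := by
  refine (injective_iff_map_eq_one _).mpr fun g hg => Equiv.ext fun a => ?_
  by_contra ha
  obtain ⟨s, has, hgas⟩ := Set.powersetCard.exists_mem_notMem (α := Fin m) hk
    (by simpa using hkm) (Ne.symm ha)
  have hs : g • s.1 = s.1 := congrArg Subtype.val (Equiv.ext_iff.mp hg ⟨s.1, s.2⟩)
  have : g • a ∈ g • s.1 := Finset.smul_mem_smul_finset has
  rw [hs] at this
  exact hgas this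

/-- If `m ≥ 5`, `1 ≤ k`, `2k < m`, and `H` is a nontrivial subgroup of `Sym(Ω_{m,k})`
whose normalizer `N` satisfies `A_m^{(k)} ≤ N ≤ S_m^{(k)}`, then `A_m^{(k)} ≤ H`
and `soc(H) = A_m^{(k)}`. -/
theorem socle_eq_AmK_of_normalizer_large (m k : ℕ) (hm : 5 ≤ m) (hk : 1 ≤ k)
    (hkm : 2 * k < m) (H : Subgroup (Equiv.Perm (KSubsets m k))) (hH : H ≠ ⊥)
    (hlow : Subgroup.map (ksubsetsHom m k) (alternatingGroup (Fin m)) ≤ Subgroup.normalizer (H : Set (Equiv.Perm (KSubsets m k))))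
    (hhigh : Subgroup.normalizer (H : Set (Equiv.Perm (KSubsets m k))) ≤ Subgroup.map (ksubsetsHom m k) ⊤) :
    Subgroup.map (ksubsetsHom m k) (alternatingGroup (Fin m)) ≤ H ∧
      Subgroup.map H.subtype (socle ↥H)
        = Subgroup.map (ksubsetsHom m k) (alternatingGroup (Fin m)) := by
  have hcard : 5 ≤ Nat.card (Fin m) := by simpa using hm
  have hφ := ksubsetsHom_injective hk (by omega : k < m)
  have := alternatingGroup.isSimpleGroup hcard
  have := (equivMapOfInjective (alternatingGroup (Fin m)) _ hφ).symm.isSimpleGroup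
  have hHS : H ≤ (⊤ : Subgroup _).map (ksubsetsHom m k) := le_normalizer.trans hhigh
  have hHA : H ≤ normalizer ((alternatingGroup (Fin m)).map (ksubsetsHom m k) : Set _) := by
    refine hHS.trans (le_trans ?_ (le_normalizer_map _))
    rw [normalizer_eq_top_iff.mpr alternatingGroup.normal]
  have hC : H ⊓ centralizer ((alternatingGroup (Fin m)).map (ksubsetsHom m k) : Set _) = ⊥ :=
    eq_bot_iff.mpr ((inf_le_inf_right _ hHS).trans (inf_centralizer_map_eq_bot hφ
      (Equiv.Perm.centralizer_alternatingGroup_eq_bot hcard)).le)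
  have hAH := le_of_isSimpleGroup_of_le_normalizer hHA hlow hC hH
  exact ⟨hAH, map_subtype_socle_eq hAH hHA hC⟩
end
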